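/- Let N ≥ 1 be a natural number and consider subdomains indexed 0, 1, …, N−1 arranged on a path, with the inflow information initially available only in subdomain 0. Define the informed sets A_k ⊆ {0,…,N−1} by A_0 = {0} and, for each red-black iteration, first the red phase B_k = A_k ∪ { m even, m < N : m−1 ∈ A_k or m+1 ∈ A_k } and then the black phase A_{k+1} = B_k ∪ { m odd, m < N : m−1 ∈ B_k or m+1 ∈ B_k }. Then after ⌈N/2⌉ red-black iterations all subdomains are informed: A_{⌈N/2⌉} = {0, 1, …, N−1}. Moreover, for every k ≥ 1, A_k = {0, 1, …, min(2k−1, N−1)}, so ⌈N/2⌉ iterations are also necessary when N ≥ 2. -/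
import Mathlib


/-- Red phase: every even-numbered subdomain `m < N` with an informed neighbor
becomes informed. -/
def redPhase (N : ℕ) (A : Set ℕ) : Set ℕ :=
  A ∪ {m | Even m ∧ m < N ∧ (m - 1 ∈ A ∨ m + 1 ∈ A)}

/-- Black phase: every odd-numbered subdomain `m < N` with an informed neighbor
becomes informed. -/
def blackPhase (N : ℕ) (B : Set ℕ) : Set ℕ :=
  B ∪ {m | Odd m ∧ m < N ∧ (m - 1 ∈ B ∨ m + 1 ∈ B)}

/-- The set of informed subdomains after `k` red-black iterations, starting from the
inflow subdomain `0`. -/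
def informed (N : ℕ) : ℕ → Set ℕ
  | 0 => {0}
  | k + 1 => blackPhase N (redPhase N (informed N k))

lemma rb_step (N t : ℕ) (hN : 1 ≤ N) (ht : t % 2 = 1 ∨ t = N - 1) (htN : t ≤ N - 1) :
    blackPhase N (redPhase N {m | m ≤ t}) = {m | m ≤ min (t + 2) (N - 1)} := by
  ext m
  simp only [blackPhase, redPhase, Set.mem_union, Set.mem_setOf_eq, Nat.even_iff, Nat.odd_iff]
  omega

lemma rb_base (N : ℕ) (hN : 1 ≤ N) :
    informed N 1 = {m | m ≤ min 1 (N - 1)} := by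
  ext m
  simp only [informed, blackPhase, redPhase, Set.mem_union, Set.mem_setOf_eq,
    Set.mem_singleton_iff, Nat.even_iff, Nat.odd_iff]
  omega

lemma informed_eq (N : ℕ) (hN : 1 ≤ N) (k : ℕ) (hk : 1 ≤ k) :
    informed N k = {m | m ≤ min (2 * k - 1) (N - 1)} := by
  induction k with
  | zero => omega
  | succ k ih =>
    rcases Nat.eq_or_lt_of_le hk with h1 | h1
    · rw [← h1]; simpa using rb_base N hN
    · have hk1 : 1 ≤ k := by omega
      have := ih hk1
      show blackPhase N (redPhase N (informed N k)) = _
      rw [this, rb_step N (min (2 * k - 1) (N - 1)) hN (by omega) (by omega)]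
      ext m
      simp only [Set.mem_setOf_eq]
      omega

/-- **Propagation of inflow information in the red-black alternating Schwarz method.**
For a chain of `N ≥ 1` subdomains `0, …, N-1` with the inflow information initially only
in subdomain `0`, after `⌈N/2⌉` red-black iterations all subdomains are informed.
Moreover, for every `k ≥ 1` the informed set is exactly `{0, …, min (2k-1) (N-1)}`, so
for `N ≥ 2` fewer than `⌈N/2⌉` iterations do not suffice. -/
theorem redblack_information_propagation (N : ℕ) (hN : 1 ≤ N) :
    informed N ((N + 1) / 2) = {m | m < N} ∧
    (∀ k : ℕ, 1 ≤ k → informed N k = {m | m ≤ min (2 * k - 1) (N - 1)}) ∧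
    (2 ≤ N → ∀ k : ℕ, k < (N + 1) / 2 → informed N k ≠ {m | m < N}) := by
  refine ⟨?_, fun k hk => informed_eq N hN k hk, ?_⟩
  · rw [informed_eq N hN ((N + 1) / 2) (by omega)]
    ext m
    simp only [Set.mem_setOf_eq]
    omega
  · intro h2 k hk hcontra
    match k with
    | 0 =>
      have : (1 : ℕ) ∈ informed N 0 := by rw [hcontra]; simp; omega
      simp [informed] at this
    | k + 1 =>
      rw [informed_eq N hN (k + 1) (by omega)] at hcontra
      have : N - 1 ∈ {m | m ≤ min (2 * (k + 1) - 1) (N - 1)} := by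
        rw [hcontra]; simp only [Set.mem_setOf_eq]; omega
      simp only [Set.mem_setOf_eq] at this
      omega
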